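/- arXiv:2602.06668 — 2 statements merged into one kernel-verified Lean document; each statement's English description precedes it below -/
import Mathlib

section
/- The number of functions F : F_q^n → F_q^m whose EA-stabilizer is nontrivial is at most |AGL(n, q)| · |AGL(m, q)| · q^(c·m·q^n), where c = max{(q+1)/(2q), 1 - 1/m}. -/
/-!
If `x ↦ P x + a` is the identity, a function fixed by `(P, a, Q, b)` takes values in the fixed
points of `y ↦ Q y + b`, a proper affine subspace, so there are at most `q ^ ((m - 1) q ^ n)`
of them. Otherwise a fixed `F` satisfies `F = τ ∘ F ∘ σ` with `σ x = P x + a`, so it is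
determined by its values on one point of each cycle of `σ`. Every cycle of `σ` is a fixed point
or has at least two elements, and the fixed points of `σ` form a proper affine subspace, so `σ`
has at most `(q + 1) q ^ n / (2 q)` cycles. Summing over the at most `|AGL(n, q)| |AGL(m, q)|`
group elements gives the bound.
-/

open Equiv Equiv.Perm Finset Matrix

section Counting

variable {X Y : Type*} [Finite X]

theorem two_mul_card_quotient_le (s : Setoid X) (f : X → X) (hf : ∀ x, s x (f x)) :
    2 * Nat.card (Quotient s) ≤ Nat.card X + Nat.card {x // f x = x} := by
  classical
  have := Fintype.ofFinite X
  -- each class contains a fixed point of `f`, or two distinct points `x` and `f x`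
  have hfib (ω : Quotient s) :
      2 ≤ #{x | Quotient.mk s x = ω} + #{x | f x = x ∧ Quotient.mk s x = ω} := by
    obtain ⟨x, rfl⟩ := Quotient.exists_rep ω
    by_cases hx : f x = x
    · have h1 : 0 < #{y | Quotient.mk s y = ⟦x⟧} := card_pos.mpr ⟨x, by simp⟩
      have h2 : 0 < #{y | f y = y ∧ Quotient.mk s y = ⟦x⟧} :=
        card_pos.mpr ⟨x, by simp [hx]⟩
      omega
    · have hsub : {f x, x} ⊆ ({y | Quotient.mk s y = ⟦x⟧} : Finset X) := by
        simp [insert_subset_iff, Quotient.eq, Setoid.symm (hf x)]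
      have := card_le_card hsub
      rw [card_pair hx] at this
      omega
  have hX : Nat.card X = ∑ ω : Quotient s, #{x | Quotient.mk s x = ω} := by
    rw [Nat.card_eq_fintype_card, ← card_univ]
    exact card_eq_sum_card_fiberwise (by simp)
  have hFix :
      Nat.card {x // f x = x} = ∑ ω : Quotient s, #{x | f x = x ∧ Quotient.mk s x = ω} := by
    rw [Nat.card_eq_fintype_card, Fintype.card_subtype,
      card_eq_sum_card_fiberwise (f := Quotient.mk s) (t := univ) (by simp)]
    simp only [filter_filter]
  calc 2 * Nat.card (Quotient s) = ∑ _ω : Quotient s, 2 := by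
        simp [Nat.card_eq_fintype_card, mul_comm]
    _ ≤ _ := sum_le_sum fun ω _ => hfib ω
    _ = _ := by rw [hX, hFix, sum_add_distrib]

theorem card_fun_eq_comp_comp_le [Finite Y] (σ : Perm X) (τ : Y → Y) :
    Nat.card {F : X → Y // ∀ x, τ (F (σ x)) = F x} ≤
      Nat.card Y ^ Nat.card (Quotient (SameCycle.setoid σ)) := by
  have iterate (F : {F : X → Y // ∀ x, τ (F (σ x)) = F x}) (k : ℕ) (x : X) :
      τ^[k] (F.1 ((σ ^ k) x)) = F.1 x := by
    induction k generalizing x with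
    | zero => rfl
    | succ k ih => rw [Function.iterate_succ_apply, pow_succ', Perm.mul_apply, F.2, ih]
  have hinj : Function.Injective
      fun (F : {F : X → Y // ∀ x, τ (F (σ x)) = F x}) (ω : Quotient (SameCycle.setoid σ)) =>
        F.1 ω.out := by
    intro F G hFG
    ext x
    obtain ⟨k, hk⟩ := (Quotient.mk_out (s := SameCycle.setoid σ) x).symm.exists_nat_pow_eq
    rw [← iterate F k, ← iterate G k, hk]
    exact congrArg _ (congrFun hFG _)
  simpa only [Nat.card_fun] using Nat.card_le_card_of_injective _ hinj

theorem card_fun_eq_comp_eq_pow (τ : Y → Y) :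
    Nat.card {F : X → Y // ∀ x, τ (F x) = F x} = Nat.card {y // τ y = y} ^ Nat.card X := by
  rw [Nat.card_congr (subtypePiEquivPi (p := fun _ y => τ y = y)), Nat.card_fun]

end Counting

section LinearAlgebra

variable {K V V' : Type*} [Field K] [AddCommGroup V] [Module K V] [AddCommGroup V'] [Module K V']

theorem Submodule.card_mul_card_le_of_ne_top [Finite K] [Module.Finite K V] {W : Submodule K V}
    (hW : W ≠ ⊤) : Nat.card K * Nat.card W ≤ Nat.card V := by
  rw [Module.natCard_eq_pow_finrank (K := K) (V := W),
    Module.natCard_eq_pow_finrank (K := K) (V := V), ← pow_succ']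
  exact Nat.pow_le_pow_right Nat.card_pos (Submodule.finrank_lt hW)

theorem LinearMap.card_fiber_le_card_ker [Finite V] (g : V →ₗ[K] V') (c : V') :
    Nat.card {x // g x = c} ≤ Nat.card (LinearMap.ker g) := by
  rcases isEmpty_or_nonempty {x // g x = c} with h | ⟨x₀, hx₀⟩
  · simp
  refine Nat.card_le_card_of_injective (fun x => ⟨x.1 - x₀, by simp [x.2, hx₀]⟩) ?_
  intro x y hxy
  exact Subtype.ext (sub_left_injective (congrArg Subtype.val hxy))

theorem LinearMap.card_mul_card_fiber_le [Finite K] [Finite V] (g : V →ₗ[K] V') (c : V')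
    (h : ¬(g = 0 ∧ c = 0)) : Nat.card K * Nat.card {x // g x = c} ≤ Nat.card V := by
  by_cases hg : g = 0
  · have : IsEmpty {x // g x = c} := ⟨fun x => h ⟨hg, by simpa [hg] using x.2.symm⟩⟩
    simp
  · exact (Nat.mul_le_mul_left _ (g.card_fiber_le_card_ker c)).trans
      (Submodule.card_mul_card_le_of_ne_top (LinearMap.ker_eq_top.not.mpr hg))

end LinearAlgebra

theorem Matrix.card_mul_card_affine_fixed_le {K : Type*} [Field K] [Fintype K] {n : ℕ}
    (P : Matrix (Fin n) (Fin n) K) (a : Fin n → K) (h : ¬(P = 1 ∧ a = 0)) :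
    Fintype.card K * Nat.card {x // P *ᵥ x + a = x} ≤ Fintype.card K ^ n := by
  set g : (Fin n → K) →ₗ[K] (Fin n → K) := toLin' P - LinearMap.id
  have hfix : {x // P *ᵥ x + a = x} ≃ {x // g x = -a} :=
    Equiv.subtypeEquivRight fun x => by
      rw [LinearMap.sub_apply, toLin'_apply, LinearMap.id_apply, eq_neg_iff_add_eq_zero,
        sub_add_eq_add_sub, sub_eq_zero]
  have hg : ¬(g = 0 ∧ -a = 0) := by
    rwa [sub_eq_zero, ← toLin'_one, toLin'.injective.eq_iff, neg_eq_zero]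
  have key := g.card_mul_card_fiber_le (-a) hg
  rwa [← Nat.card_congr hfix, Nat.card_eq_fintype_card (α := K),
    Nat.card_eq_fintype_card (α := Fin n → K), Fintype.card_fun, Fintype.card_fin] at key

theorem Nat.le_pow_pred_of_mul_le_pow {q k m : ℕ} (hq : 0 < q) (h : q * k ≤ q ^ m) :
    k ≤ q ^ (m - 1) := by
  cases m with
  | zero => simpa using (Nat.le_mul_of_pos_left k hq).trans h
  | succ m => exact Nat.le_of_mul_le_mul_left (by rwa [← pow_succ']) hq

theorem Nat.cast_sub_one_le_one_sub_one_div_mul (m : ℕ) :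
    ((m - 1 : ℕ) : ℝ) ≤ (1 - 1 / (m : ℝ)) * m := by
  rcases Nat.eq_zero_or_pos m with rfl | hm
  · simp
  · rw [Nat.cast_sub hm, sub_mul, one_div_mul_cancel (by positivity)]
    simp

theorem Nat.cast_pow_le_rpow {q e : ℕ} {x : ℝ} (hq : 1 ≤ q) (h : (e : ℝ) ≤ x) :
    ((q ^ e : ℕ) : ℝ) ≤ (q : ℝ) ^ x := by
  rw [Nat.cast_pow, ← Real.rpow_natCast]
  exact Real.rpow_le_rpow_of_exponent_le (by exact_mod_cast hq) h

section EAGroup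

variable {K : Type*} [Field K] [Fintype K] {n m : ℕ}

/-- The functions fixed by the EA-transformation `(P, a, Q, b)`. -/
def eaFixedPoints (P : Matrix (Fin n) (Fin n) K) (a : Fin n → K) (Q : Matrix (Fin m) (Fin m) K)
    (b : Fin m → K) : Set ((Fin n → K) → (Fin m → K)) :=
  {F | ∀ x, Q *ᵥ F (P *ᵥ x + a) + b = F x}

noncomputable def affinePerm (P : Matrix (Fin n) (Fin n) K) (a : Fin n → K) (hP : IsUnit P) :
    Perm (Fin n → K) :=
  Equiv.ofBijective (fun x => P *ᵥ x + a) <| Finite.injective_iff_bijective.mp <|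
    (add_left_injective a).comp (mulVec_injective_iff_isUnit.mpr hP)

theorem card_eaFixedPoints_one_zero_le (Q : Matrix (Fin m) (Fin m) K) (b : Fin m → K)
    (h : ¬(Q = 1 ∧ b = 0)) :
    (Nat.card (eaFixedPoints (1 : Matrix (Fin n) (Fin n) K) 0 Q b) : ℝ) ≤
      (Fintype.card K : ℝ) ^ ((1 - 1 / (m : ℝ)) * m * (Fintype.card K : ℝ) ^ n) := by
  set q := Fintype.card K
  have hcard : Nat.card (eaFixedPoints (1 : Matrix (Fin n) (Fin n) K) 0 Q b) =
      Nat.card {y // Q *ᵥ y + b = y} ^ q ^ n := by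
    have hset : eaFixedPoints (1 : Matrix (Fin n) (Fin n) K) 0 Q b =
        {F | ∀ x, Q *ᵥ F x + b = F x} := by
      simp only [eaFixedPoints, one_mulVec, add_zero]
    have := card_fun_eq_comp_eq_pow (X := Fin n → K) (fun y => Q *ᵥ y + b)
    rw [Nat.card_fun, Nat.card_fin, Nat.card_eq_fintype_card (α := K)] at this
    rw [hset]
    exact this
  have hfix : Nat.card {y // Q *ᵥ y + b = y} ≤ q ^ (m - 1) :=
    Nat.le_pow_pred_of_mul_le_pow Fintype.card_pos (card_mul_card_affine_fixed_le Q b h)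
  calc (Nat.card (eaFixedPoints (1 : Matrix (Fin n) (Fin n) K) 0 Q b) : ℝ)
      ≤ ((q ^ ((m - 1) * q ^ n) : ℕ) : ℝ) := by
        rw [hcard, pow_mul]
        exact_mod_cast Nat.pow_le_pow_left hfix _
    _ ≤ _ := Nat.cast_pow_le_rpow Fintype.card_pos <| by
        push_cast
        gcongr
        exact Nat.cast_sub_one_le_one_sub_one_div_mul m

theorem card_eaFixedPoints_le_of_ne (P : Matrix (Fin n) (Fin n) K) (a : Fin n → K)
    (Q : Matrix (Fin m) (Fin m) K) (b : Fin m → K) (hP : IsUnit P) (h : ¬(P = 1 ∧ a = 0)) :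
    (Nat.card (eaFixedPoints P a Q b) : ℝ) ≤
      (Fintype.card K : ℝ) ^
        (((Fintype.card K : ℝ) + 1) / (2 * Fintype.card K) * m * (Fintype.card K : ℝ) ^ n) := by
  set q := Fintype.card K
  set σ := affinePerm P a hP
  set N := Nat.card (Quotient (SameCycle.setoid σ))
  have hcard : Nat.card (eaFixedPoints P a Q b) ≤ q ^ (m * N) := by
    rw [pow_mul]
    have := card_fun_eq_comp_comp_le σ (fun y => Q *ᵥ y + b)
    rwa [Nat.card_fun, Nat.card_fin, Nat.card_eq_fintype_card (α := K)] at this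
  have hN : 2 * N ≤ q ^ n + Nat.card {x // P *ᵥ x + a = x} := by
    have := two_mul_card_quotient_le (SameCycle.setoid σ) σ
      fun x => (SameCycle.refl σ x).apply_right
    rwa [Nat.card_fun, Nat.card_fin, Nat.card_eq_fintype_card (α := K)] at this
  have hfix := card_mul_card_affine_fixed_le P a h
  have hqN : 2 * q * N ≤ (q + 1) * q ^ n := by nlinarith
  have hq : (0 : ℝ) < q := by exact_mod_cast Fintype.card_pos
  calc (Nat.card (eaFixedPoints P a Q b) : ℝ) ≤ ((q ^ (m * N) : ℕ) : ℝ) := mod_cast hcard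
    _ ≤ _ := Nat.cast_pow_le_rpow Fintype.card_pos <| by
        rw [div_mul_eq_mul_div, div_mul_eq_mul_div, le_div_iff₀ (by positivity)]
        have : (2 * q * N : ℝ) ≤ (q + 1) * q ^ n := by exact_mod_cast hqN
        push_cast
        nlinarith

theorem card_eaFixedPoints_le (P : Matrix (Fin n) (Fin n) K) (a : Fin n → K)
    (Q : Matrix (Fin m) (Fin m) K) (b : Fin m → K) (hP : IsUnit P)
    (h : ¬(P = 1 ∧ a = 0 ∧ Q = 1 ∧ b = 0)) :
    (Nat.card (eaFixedPoints P a Q b) : ℝ) ≤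
      (Fintype.card K : ℝ) ^
        ((max (((Fintype.card K : ℝ) + 1) / (2 * (Fintype.card K : ℝ))) (1 - 1 / (m : ℝ)))
          * (m : ℝ) * (Fintype.card K : ℝ) ^ n) := by
  have hq : (1 : ℝ) ≤ Fintype.card K := by exact_mod_cast Fintype.card_pos
  by_cases hPa : P = 1 ∧ a = 0
  · obtain ⟨rfl, rfl⟩ := hPa
    refine (card_eaFixedPoints_one_zero_le Q b fun hQb => h ⟨rfl, rfl, hQb⟩).trans ?_
    exact Real.rpow_le_rpow_of_exponent_le hq (by gcongr; exact le_max_right _ _)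
  · refine (card_eaFixedPoints_le_of_ne P a Q b hP hPa).trans ?_
    exact Real.rpow_le_rpow_of_exponent_le hq (by gcongr; exact le_max_left _ _)

theorem natCard_GL_prod_fun (n : ℕ) :
    Nat.card (GL (Fin n) K × (Fin n → K)) =
      Fintype.card K ^ n * ∏ i ∈ range n, (Fintype.card K ^ n - Fintype.card K ^ i) := by
  rw [Nat.card_prod, card_GL_field, Fin.prod_univ_eq_prod_range (fun i => _ ^ n - _ ^ i),
    Nat.card_fun, Nat.card_fin, Nat.card_eq_fintype_card, mul_comm]

end EAGroup

theorem stmt10_general {K : Type*} [Field K] [Fintype K] (n m : ℕ) :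
    (Nat.card {F : (Fin n → K) → (Fin m → K) |
        ∃ (P : Matrix (Fin n) (Fin n) K) (a : Fin n → K)
          (Q : Matrix (Fin m) (Fin m) K) (b : Fin m → K),
          IsUnit P ∧ IsUnit Q ∧ ¬(P = 1 ∧ a = 0 ∧ Q = 1 ∧ b = 0) ∧
          ∀ x, Q.mulVec (F (P.mulVec x + a)) + b = F x} : ℝ) ≤
      ((Fintype.card K ^ n * ∏ i ∈ Finset.range n, (Fintype.card K ^ n - Fintype.card K ^ i) : ℕ) : ℝ) *
      ((Fintype.card K ^ m * ∏ i ∈ Finset.range m, (Fintype.card K ^ m - Fintype.card K ^ i) : ℕ) : ℝ) *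
      (Fintype.card K : ℝ) ^
        ((max (((Fintype.card K : ℝ) + 1) / (2 * (Fintype.card K : ℝ))) (1 - 1 / (m : ℝ)))
          * (m : ℝ) * (Fintype.card K : ℝ) ^ n) := by
  classical
  set B : ℝ := (Fintype.card K : ℝ) ^
    ((max (((Fintype.card K : ℝ) + 1) / (2 * (Fintype.card K : ℝ))) (1 - 1 / (m : ℝ)))
      * (m : ℝ) * (Fintype.card K : ℝ) ^ n)
  let T := {t : (GL (Fin n) K × (Fin n → K)) × (GL (Fin m) K × (Fin m → K)) //
    ¬((t.1.1 : Matrix (Fin n) (Fin n) K) = 1 ∧ t.1.2 = 0 ∧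
      (t.2.1 : Matrix (Fin m) (Fin m) K) = 1 ∧ t.2.2 = 0)}
  calc _ ≤ ∑ t : T, (Nat.card (eaFixedPoints (t.1.1.1 : Matrix _ _ K) t.1.1.2
          (t.1.2.1 : Matrix _ _ K) t.1.2.2) : ℝ) := by
        refine mod_cast (Set.ncard_le_ncard ?_).trans (Set.ncard_iUnion_le_of_fintype _)
        rintro F ⟨P, a, Q, b, hP, hQ, h, hF⟩
        exact Set.mem_iUnion.mpr ⟨⟨((hP.unit, a), (hQ.unit, b)), by simpa using h⟩, hF⟩
    _ ≤ ∑ _t : T, B := sum_le_sum fun t _ => card_eaFixedPoints_le _ _ _ _ t.1.1.1.isUnit t.2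
    _ = Fintype.card T * B := by simp
    _ ≤ _ := by
        gcongr
        rw [← natCard_GL_prod_fun, ← natCard_GL_prod_fun, ← Nat.cast_mul, ← Nat.card_prod,
          ← Nat.card_eq_fintype_card]
        exact_mod_cast Finite.card_subtype_le _

theorem stmt10 {K : Type*} [Field K] [Fintype K] (n m : ℕ) (hn : 1 ≤ n) (hm : 1 ≤ m) :
    (Nat.card {F : (Fin n → K) → (Fin m → K) |
        ∃ (P : Matrix (Fin n) (Fin n) K) (a : Fin n → K)
          (Q : Matrix (Fin m) (Fin m) K) (b : Fin m → K),
          IsUnit P ∧ IsUnit Q ∧ ¬(P = 1 ∧ a = 0 ∧ Q = 1 ∧ b = 0) ∧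
          ∀ x, Q.mulVec (F (P.mulVec x + a)) + b = F x} : ℝ) ≤
      ((Fintype.card K ^ n * ∏ i ∈ Finset.range n, (Fintype.card K ^ n - Fintype.card K ^ i) : ℕ) : ℝ) *
      ((Fintype.card K ^ m * ∏ i ∈ Finset.range m, (Fintype.card K ^ m - Fintype.card K ^ i) : ℕ) : ℝ) *
      (Fintype.card K : ℝ) ^
        ((max (((Fintype.card K : ℝ) + 1) / (2 * (Fintype.card K : ℝ))) (1 - 1 / (m : ℝ)))
          * (m : ℝ) * (Fintype.card K : ℝ) ^ n) :=
  stmt10_general n m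
end

section
/- The number of EA-equivalence classes of functions F : F_q^n → F_q^m satisfies q^(m·q^n)/|Γ| ≤ N ≤ q^(m·q^n)/|Γ| + |Γ| · q^(c·m·q^n), where Γ = AGL(n, q) × AGL(m, q) and c = max{(q+1)/(2q), 1 - 1/m}. -/
/-!
By Burnside's lemma, `N · |Γ| = q^(m q^n) + ∑_{g ≠ 1} |Fix g|`, which gives the lower bound at
once and reduces the upper bound to `|Fix g| ≤ q^(c m q^n)` for `g = (A, B) ≠ 1`. A function fixed
by `g` satisfies `F ∘ A = B ∘ F`. If `A = 1`, then `F` takes values in the fixed points of the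
affine map `B ≠ 1`, an affine subspace of size at most `q^(m-1)`. Otherwise `F` is determined by
its values on one point of each cycle of `A`, and since `A` fixes at most `q^(n-1)` points, it has
at most `(q^n + q^(n-1)) / 2` cycles.
-/

open Function Finset Matrix

theorem Module.card_le_card_of_nontrivial (K M : Type*) [DivisionRing K] [AddCommGroup M]
    [Module K M] [Finite M] [Nontrivial M] : Nat.card K ≤ Nat.card M := by
  obtain ⟨v, hv⟩ := exists_ne (0 : M)
  exact Nat.card_le_card_of_injective _ (smul_left_injective K hv)

theorem Submodule.card_mul_card_le_of_ne_top_s12 {K V : Type*} [DivisionRing K] [AddCommGroup V]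
    [Module K V] [Finite V] {S : Submodule K V} (hS : S ≠ ⊤) :
    Nat.card S * Nat.card K ≤ Nat.card V := by
  have : Nontrivial (V ⧸ S) := Submodule.Quotient.nontrivial_iff.mpr hS
  have : Finite (V ⧸ S) := Finite.of_surjective _ S.mkQ_surjective
  rw [S.card_eq_card_quotient_mul_card]
  exact Nat.mul_le_mul_left _ (Module.card_le_card_of_nontrivial K _)

theorem AffineMap.card_fixedPoints_mul_card_le {K V : Type*} [DivisionRing K] [AddCommGroup V]
    [Module K V] [Finite V] {f : V →ᵃ[K] V} (hf : f ≠ AffineMap.id K V) :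
    Nat.card (fixedPoints f) * Nat.card K ≤ Nat.card V := by
  rcases (fixedPoints f).eq_empty_or_nonempty with hempty | ⟨x₀, hx₀⟩
  · simp [hempty]
  set L := f.linear - LinearMap.id
  have hL : ∀ x, L (x - x₀) = f x - x := fun x => by
    rw [LinearMap.sub_apply, LinearMap.id_apply, ← vsub_eq_sub x x₀, f.linearMap_vsub, hx₀.eq]
    simp only [vsub_eq_sub]
    abel
  have hfix : ∀ x, x ∈ fixedPoints f ↔ x - x₀ ∈ LinearMap.ker L := fun x => by
    rw [LinearMap.mem_ker, hL, sub_eq_zero]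
    rfl
  have hker : LinearMap.ker L ≠ ⊤ := by
    intro htop
    refine hf (AffineMap.ext fun x => sub_eq_zero.mp ?_)
    rw [AffineMap.id_apply, ← hL, LinearMap.ker_eq_top.mp htop, LinearMap.zero_apply]
  calc Nat.card (fixedPoints f) * Nat.card K
      ≤ Nat.card (LinearMap.ker L) * Nat.card K := by
        refine Nat.mul_le_mul_right _ (Nat.card_le_card_of_injective
          (fun x => ⟨x.1 - x₀, (hfix x.1).mp x.2⟩) fun x y h => ?_)
        exact Subtype.ext (sub_left_injective (congrArg Subtype.val h))
    _ ≤ Nat.card V := Submodule.card_mul_card_le_of_ne_top_s12 hker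

theorem AffineEquiv.card_fixedPoints_mul_card_le {K V : Type*} [DivisionRing K] [AddCommGroup V]
    [Module K V] [Finite V] {f : V ≃ᵃ[K] V} (hf : f ≠ 1) :
    Nat.card (fixedPoints f) * Nat.card K ≤ Nat.card V :=
  AffineMap.card_fixedPoints_mul_card_le (f := f.toAffineMap) fun h =>
    hf (AffineEquiv.ext fun x => congrArg (· x) h)

instance AffineEquiv.finite {K V : Type*} [Ring K] [AddCommGroup V] [Module K V] [Finite V] :
    Finite (V ≃ᵃ[K] V) :=
  Finite.of_injective _ AffineEquiv.coeFn_injective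

theorem AffineEquiv.natCard_eq {K V : Type*} [Ring K] [AddCommGroup V] [Module K V] :
    Nat.card (V ≃ᵃ[K] V) = Nat.card (V ≃ₗ[K] V) * Nat.card V := by
  rw [← Nat.card_prod]
  refine Nat.card_congr
    { toFun := fun A => (A.linear, A 0)
      invFun := fun p => p.1.toAffineEquiv.trans (AffineEquiv.constVAdd K V p.2)
      left_inv := fun A => AffineEquiv.ext fun x => ?_
      right_inv := fun p => Prod.ext (LinearEquiv.ext fun x => rfl) (by simp) }
  rw [AffineEquiv.trans_apply, AffineEquiv.constVAdd_apply, vadd_eq_add, add_comm]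
  exact (congrFun (AffineMap.decomp A.toAffineMap) x).symm

theorem LinearEquiv.natCard_pi_fin {K : Type*} [Field K] [Fintype K] (n : ℕ) :
    Nat.card ((Fin n → K) ≃ₗ[K] (Fin n → K)) =
      ∏ i ∈ range n, (Fintype.card K ^ n - Fintype.card K ^ i) := by
  rw [← Fin.prod_univ_eq_prod_range, ← Matrix.card_GL_field]
  exact Nat.card_congr (Matrix.GeneralLinearGroup.toLin.trans
    (LinearMap.GeneralLinearGroup.generalLinearEquiv K _)).toEquiv.symm

theorem exists_affineEquiv_coe_eq_iff {R ι : Type*} [CommRing R] [Fintype ι] [DecidableEq ι]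
    {f : (ι → R) → (ι → R)} :
    (∃ A : (ι → R) ≃ᵃ[R] (ι → R), ⇑A = f) ↔
      ∃ (P : Matrix ι ι R) (a : ι → R), IsUnit P ∧ ∀ x, f x = P *ᵥ x + a := by
  constructor
  · rintro ⟨A, rfl⟩
    refine ⟨LinearMap.toMatrix' A.linear, A 0, Matrix.mulVec_surjective_iff_isUnit.mp fun y =>
      ⟨A.linear.symm y, by simp [LinearMap.toMatrix'_mulVec]⟩, fun x => ?_⟩
    rw [LinearMap.toMatrix'_mulVec]
    exact congrFun (AffineMap.decomp A.toAffineMap) x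
  · rintro ⟨P, a, hP, hf⟩
    let L := LinearMap.GeneralLinearGroup.generalLinearEquiv R _
      (Matrix.GeneralLinearGroup.toLin hP.unit)
    refine ⟨L.toAffineEquiv.trans (AffineEquiv.constVAdd R (ι → R) a), funext fun x => ?_⟩
    simp [hf, L, add_comm]

theorem Equiv.Perm.two_mul_card_quotient_sameCycle_le {α : Type*} [Finite α] (σ : Equiv.Perm α) :
    2 * Nat.card (Quotient (SameCycle.setoid σ)) ≤ Nat.card α + Nat.card (fixedPoints σ) := by
  classical
  have := Fintype.ofFinite α
  set cycleOf : α → Quotient (SameCycle.setoid σ) := Quotient.mk _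
  set fixed : Finset α := {x | IsFixedPt σ x}
  have fiber_bound : ∀ c, 2 ≤ #{x | cycleOf x = c} + #{x ∈ fixed | cycleOf x = c} := by
    intro c
    obtain ⟨x, rfl⟩ : ∃ x, cycleOf x = c := Quotient.exists_rep c
    by_cases hx : IsFixedPt σ x
    · have h1 : 1 ≤ #{y | cycleOf y = cycleOf x} := Finset.card_pos.mpr ⟨x, by simp⟩
      have h2 : 1 ≤ #{y ∈ fixed | cycleOf y = cycleOf x} :=
        Finset.card_pos.mpr ⟨x, by simp [fixed, hx]⟩
      omega
    · have : 2 ≤ #{y | cycleOf y = cycleOf x} := by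
        refine Finset.one_lt_card.mpr ⟨x, by simp, σ x, ?_, fun h => hx h.symm⟩
        simpa using Quotient.sound (sameCycle_apply_left.mpr (SameCycle.refl σ x))
      omega
  calc 2 * Nat.card (Quotient (SameCycle.setoid σ))
      = ∑ _c, 2 := by simp [mul_comm]
    _ ≤ ∑ c, (#{x | cycleOf x = c} + #{x ∈ fixed | cycleOf x = c}) :=
        sum_le_sum fun c _ => fiber_bound c
    _ = Nat.card α + Nat.card (fixedPoints σ) := by
        rw [sum_add_distrib, ← card_eq_sum_card_fiberwise (by simp),
          ← card_eq_sum_card_fiberwise (by simp)]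
        simp [Nat.card_eq_fintype_card, Fintype.card_subtype, fixed, fixedPoints]

theorem Equiv.Perm.card_semiconj_le {α β : Type*} [Finite α] [Finite β] (σ : Equiv.Perm α)
    (φ : β → β) :
    Nat.card {F : α → β // Semiconj F σ φ} ≤
      Nat.card β ^ Nat.card (Quotient (SameCycle.setoid σ)) := by
  rw [← Nat.card_fun]
  refine Nat.card_le_card_of_injective (fun F c => F.1 c.out) fun F G h =>
    Subtype.ext (funext fun x => ?_)
  obtain ⟨i, -, hi⟩ := (Quotient.mk_out (s := SameCycle.setoid σ) x).exists_pow_eq'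
  rw [← hi, coe_pow, F.2.iterate_right, G.2.iterate_right]
  exact congrArg _ (congrFun h _)

theorem MulAction.card_orbits_mul_card_eq_add_sum {G X : Type*} [Group G] [Fintype G]
    [DecidableEq G] [MulAction G X] [Finite X] :
    Nat.card (orbitRel.Quotient G X) * Nat.card G =
      Nat.card X + ∑ g ∈ (univ : Finset G).erase 1, Nat.card (fixedBy X g) := by
  classical
  have := Fintype.ofFinite X
  have := Fintype.ofFinite (orbitRel.Quotient G X)
  simp only [Nat.card_eq_fintype_card]
  rw [← sum_card_fixedBy_eq_card_orbits_mul_card_group, ← add_sum_erase _ _ (mem_univ 1)]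
  simp

theorem MulAction.card_le_card_orbits_mul_card {G X : Type*} [Group G] [Fintype G]
    [MulAction G X] [Finite X] :
    Nat.card X ≤ Nat.card (orbitRel.Quotient G X) * Nat.card G := by
  classical
  rw [card_orbits_mul_card_eq_add_sum]
  exact Nat.le_add_right _ _

theorem MulAction.card_orbits_le_of_card_fixedBy_le {G X : Type*} [Group G] [Fintype G]
    [MulAction G X] [Finite X] {B : ℝ} (hB0 : 0 ≤ B)
    (hB : ∀ g ≠ (1 : G), (Nat.card (fixedBy X g) : ℝ) ≤ B) :
    (Nat.card (orbitRel.Quotient G X) : ℝ) ≤ Nat.card X / Nat.card G + B := by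
  classical
  have hG : (0 : ℝ) < Nat.card G := by exact_mod_cast Nat.card_pos
  have key : (Nat.card (orbitRel.Quotient G X) : ℝ) * Nat.card G ≤ Nat.card X + Nat.card G * B :=
    calc (Nat.card (orbitRel.Quotient G X) : ℝ) * Nat.card G
        = Nat.card X + ∑ g ∈ (univ : Finset G).erase 1, (Nat.card (fixedBy X g) : ℝ) := by
          exact_mod_cast card_orbits_mul_card_eq_add_sum
      _ ≤ Nat.card X + ∑ _g ∈ (univ : Finset G).erase 1, B := by
          gcongr with g hg
          exact hB g (ne_of_mem_erase hg)
      _ ≤ Nat.card X + ∑ _g : G, B := by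
          gcongr _ + ?_
          exact sum_le_sum_of_subset_of_nonneg (erase_subset 1 univ) fun _ _ _ => hB0
      _ = Nat.card X + Nat.card G * B := by simp [Nat.card_eq_fintype_card]
  rw [div_add' _ _ _ hG.ne', le_div_iff₀ hG]
  linarith

namespace ExtendedAffine

section Ring

variable {K V W : Type*} [Ring K] [AddCommGroup V] [Module K V] [AddCommGroup W] [Module K W]

/-- EA-equivalence is the orbit relation of this action; the input transformation acts through
its inverse, which makes this a left action. -/
instance : MulAction ((V ≃ᵃ[K] V) × (W ≃ᵃ[K] W)) (V → W) where
  smul g F := g.2 ∘ F ∘ g.1.symm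
  one_smul _ := rfl
  mul_smul _ _ _ := rfl

theorem smul_def (g : (V ≃ᵃ[K] V) × (W ≃ᵃ[K] W)) (F : V → W) :
    g • F = g.2 ∘ F ∘ g.1.symm := rfl

theorem exists_smul_eq_iff_matrix {R ι κ : Type*} [CommRing R] [Fintype ι] [DecidableEq ι]
    [Fintype κ] [DecidableEq κ] {F F' : (ι → R) → (κ → R)} :
    (∃ g : ((ι → R) ≃ᵃ[R] (ι → R)) × ((κ → R) ≃ᵃ[R] (κ → R)), g • F = F') ↔
      ∃ (P : Matrix ι ι R) (a : ι → R) (Q : Matrix κ κ R) (b : κ → R),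
        IsUnit P ∧ IsUnit Q ∧ ∀ x, F' x = Q *ᵥ F (P *ᵥ x + a) + b := by
  constructor
  · rintro ⟨⟨A, B⟩, rfl⟩
    obtain ⟨P, a, hP, hA⟩ := exists_affineEquiv_coe_eq_iff.mp ⟨A.symm, rfl⟩
    obtain ⟨Q, b, hQ, hB⟩ := exists_affineEquiv_coe_eq_iff.mp ⟨B, rfl⟩
    exact ⟨P, a, Q, b, hP, hQ, fun x => by simp [smul_def, hA, hB]⟩
  · rintro ⟨P, a, Q, b, hP, hQ, hF'⟩
    obtain ⟨A, hA⟩ := exists_affineEquiv_coe_eq_iff.mpr ⟨P, a, hP, fun _ => rfl⟩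
    obtain ⟨B, hB⟩ := exists_affineEquiv_coe_eq_iff.mpr ⟨Q, b, hQ, fun _ => rfl⟩
    refine ⟨(A.symm, B), funext fun x => ?_⟩
    change B (F (A x)) = F' x
    rw [hA, hB, hF']

theorem mem_fixedBy_iff {g : (V ≃ᵃ[K] V) × (W ≃ᵃ[K] W)} {F : V → W} :
    F ∈ MulAction.fixedBy (V → W) g ↔ Semiconj F g.1 g.2 := by
  rw [MulAction.mem_fixedBy, smul_def]
  constructor
  · intro h x
    simpa using (congrFun h (g.1 x)).symm
  · intro h
    funext y
    simpa using (h (g.1.symm y)).symm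

theorem card_fixedBy_of_fst_eq_one [Finite V] {g : (V ≃ᵃ[K] V) × (W ≃ᵃ[K] W)} (hg : g.1 = 1) :
    Nat.card (MulAction.fixedBy (V → W) g) = Nat.card (fixedPoints g.2) ^ Nat.card V := by
  rw [← Nat.card_fun]
  refine Nat.card_congr ((Equiv.subtypeEquivRight fun F => ?_).trans Equiv.subtypePiEquivPi)
  rw [mem_fixedBy_iff, hg]
  exact forall_congr' fun _ => eq_comm

theorem card_fixedBy_le_pow_card_cycles [Finite V] [Finite W]
    (g : (V ≃ᵃ[K] V) × (W ≃ᵃ[K] W)) :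
    Nat.card (MulAction.fixedBy (V → W) g) ≤
      Nat.card W ^ Nat.card (Quotient (Equiv.Perm.SameCycle.setoid g.1.toEquiv)) := by
  rw [← Nat.card_congr (Equiv.subtypeEquivRight fun F => mem_fixedBy_iff.symm)]
  exact Equiv.Perm.card_semiconj_le g.1.toEquiv g.2

end Ring

section FiniteField

variable {K V W : Type*} [Field K] [AddCommGroup V] [Module K V] [AddCommGroup W] [Module K W]
  [Finite K] [Finite V] [Finite W]

theorem card_fixedBy_le_rpow_of_fst_eq_one {g : (V ≃ᵃ[K] V) × (W ≃ᵃ[K] W)} (hg : g ≠ 1)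
    (h1 : g.1 = 1) :
    (Nat.card (MulAction.fixedBy (V → W) g) : ℝ) ≤
      (Nat.card K : ℝ) ^ (((Module.finrank K W : ℝ) - 1) * Nat.card V) := by
  set q := Nat.card K
  have hq : (0 : ℝ) < q := by exact_mod_cast Nat.card_pos
  have hfix : (Nat.card (fixedPoints g.2) : ℝ) ≤ (q : ℝ) ^ ((Module.finrank K W : ℝ) - 1) := by
    rw [Real.rpow_sub_one hq.ne', Real.rpow_natCast, le_div_iff₀ hq]
    exact_mod_cast Module.natCard_eq_pow_finrank (K := K) (V := W) ▸
      AffineEquiv.card_fixedPoints_mul_card_le fun h2 => hg (Prod.ext h1 h2)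
  rw [Real.rpow_mul_natCast hq.le, card_fixedBy_of_fst_eq_one h1, Nat.cast_pow]
  gcongr

theorem card_fixedBy_le_rpow_of_fst_ne_one {g : (V ≃ᵃ[K] V) × (W ≃ᵃ[K] W)} (h1 : g.1 ≠ 1) :
    (Nat.card (MulAction.fixedBy (V → W) g) : ℝ) ≤
      (Nat.card K : ℝ) ^ (((Nat.card K : ℝ) + 1) / (2 * Nat.card K) * Module.finrank K W *
        Nat.card V) := by
  set q := Nat.card K
  set N := Nat.card V
  set t := Nat.card (Quotient (Equiv.Perm.SameCycle.setoid g.1.toEquiv))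
  have hq : (1 : ℝ) < q := by exact_mod_cast Finite.one_lt_card
  have ht : 2 * t ≤ N + Nat.card (fixedPoints g.1) :=
    Equiv.Perm.two_mul_card_quotient_sameCycle_le g.1.toEquiv
  have hfix : Nat.card (fixedPoints g.1) * q ≤ N := AffineEquiv.card_fixedPoints_mul_card_le h1
  have htR : (t : ℝ) ≤ (q + 1) / (2 * q) * N := by
    rw [div_mul_eq_mul_div, le_div_iff₀ (by positivity)]
    have : (2 * t * q : ℝ) ≤ N * q + N := by
      exact_mod_cast (by nlinarith : 2 * t * q ≤ N * q + N)
    linarith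
  calc (Nat.card (MulAction.fixedBy (V → W) g) : ℝ)
      ≤ ((q ^ Module.finrank K W) ^ t : ℕ) := by
        exact_mod_cast Module.natCard_eq_pow_finrank (K := K) (V := W) ▸
          card_fixedBy_le_pow_card_cycles g
    _ = (q : ℝ) ^ (t * Module.finrank K W : ℝ) := by
        rw [mul_comm, Real.rpow_mul_natCast (by positivity), Real.rpow_natCast]
        push_cast
        ring
    _ ≤ (q : ℝ) ^ (((q : ℝ) + 1) / (2 * q) * Module.finrank K W * N) := by
        refine Real.rpow_le_rpow_of_exponent_le hq.le ?_
        have := mul_le_mul_of_nonneg_right htR (Module.finrank K W).cast_nonneg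
        linarith

theorem card_fixedBy_le_rpow {g : (V ≃ᵃ[K] V) × (W ≃ᵃ[K] W)} (hg : g ≠ 1) :
    (Nat.card (MulAction.fixedBy (V → W) g) : ℝ) ≤
      (Nat.card K : ℝ) ^ (max (((Nat.card K : ℝ) + 1) / (2 * Nat.card K))
        (1 - 1 / (Module.finrank K W : ℝ)) * Module.finrank K W * Nat.card V) := by
  set m := Module.finrank K W
  have hq : (1 : ℝ) ≤ Nat.card K := by exact_mod_cast Nat.card_pos
  by_cases h1 : g.1 = 1
  · have hm : (m : ℝ) - 1 ≤
        max (((Nat.card K : ℝ) + 1) / (2 * Nat.card K)) (1 - 1 / (m : ℝ)) * m := by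
      refine le_trans ?_ (mul_le_mul_of_nonneg_right (le_max_right _ _) m.cast_nonneg)
      rcases eq_or_ne m 0 with hm0 | hm0
      · simp [hm0]
      · rw [sub_mul, one_mul, one_div, inv_mul_cancel₀ (Nat.cast_ne_zero.mpr hm0)]
    exact (card_fixedBy_le_rpow_of_fst_eq_one hg h1).trans
      (Real.rpow_le_rpow_of_exponent_le hq (mul_le_mul_of_nonneg_right hm (Nat.cast_nonneg _)))
  · exact (card_fixedBy_le_rpow_of_fst_ne_one h1).trans
      (Real.rpow_le_rpow_of_exponent_le hq (by gcongr; exact le_max_left _ _))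

end FiniteField

end ExtendedAffine

theorem stmt12_general {K : Type*} [Field K] [Fintype K] (n m : ℕ)
    (s : Setoid ((Fin n → K) → (Fin m → K)))
    (hs : ∀ F G : (Fin n → K) → (Fin m → K), s.r F G ↔
      ∃ (P : Matrix (Fin n) (Fin n) K) (a : Fin n → K)
        (Q : Matrix (Fin m) (Fin m) K) (b : Fin m → K),
        IsUnit P ∧ IsUnit Q ∧ ∀ x, G x = Q.mulVec (F (P.mulVec x + a)) + b) :
    (Fintype.card K : ℝ) ^ (m * Fintype.card K ^ n) /
      (((Fintype.card K ^ n * ∏ i ∈ Finset.range n, (Fintype.card K ^ n - Fintype.card K ^ i)) *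
        (Fintype.card K ^ m * ∏ i ∈ Finset.range m, (Fintype.card K ^ m - Fintype.card K ^ i)) : ℕ) : ℝ)
      ≤ (Nat.card (Quotient s) : ℝ) ∧
    (Nat.card (Quotient s) : ℝ) ≤
      (Fintype.card K : ℝ) ^ (m * Fintype.card K ^ n) /
        (((Fintype.card K ^ n * ∏ i ∈ Finset.range n, (Fintype.card K ^ n - Fintype.card K ^ i)) *
          (Fintype.card K ^ m * ∏ i ∈ Finset.range m, (Fintype.card K ^ m - Fintype.card K ^ i)) : ℕ) : ℝ) +
      (((Fintype.card K ^ n * ∏ i ∈ Finset.range n, (Fintype.card K ^ n - Fintype.card K ^ i)) *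
        (Fintype.card K ^ m * ∏ i ∈ Finset.range m, (Fintype.card K ^ m - Fintype.card K ^ i)) : ℕ) : ℝ) *
        (Fintype.card K : ℝ) ^
          ((max (((Fintype.card K : ℝ) + 1) / (2 * (Fintype.card K : ℝ))) (1 - 1 / (m : ℝ)))
            * (m : ℝ) * (Fintype.card K : ℝ) ^ n) := by
  set q := Fintype.card K
  set Γ := ((Fin n → K) ≃ᵃ[K] (Fin n → K)) × ((Fin m → K) ≃ᵃ[K] (Fin m → K))
  have := Fintype.ofFinite Γ
  obtain rfl : s = MulAction.orbitRel Γ _ := Setoid.ext fun F G => by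
    rw [hs, ← ExtendedAffine.exists_smul_eq_iff_matrix, MulAction.orbitRel_apply,
      MulAction.mem_orbit_symm, MulAction.mem_orbit_iff]
  have hΓ : Nat.card Γ = (q ^ n * ∏ i ∈ range n, (q ^ n - q ^ i)) *
      (q ^ m * ∏ i ∈ range m, (q ^ m - q ^ i)) := by
    simp only [Γ, Nat.card_prod, AffineEquiv.natCard_eq, LinearEquiv.natCard_pi_fin, Nat.card_fun,
      Nat.card_fin, Nat.card_eq_fintype_card (α := K), q]
    ring
  have hX : Nat.card ((Fin n → K) → (Fin m → K)) = q ^ (m * q ^ n) := by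
    simp only [Nat.card_fun, Nat.card_fin, Nat.card_eq_fintype_card (α := K), q, pow_mul]
  rw [← hΓ]
  constructor
  · rw [div_le_iff₀ (by exact_mod_cast Nat.card_pos)]
    exact_mod_cast hX ▸ MulAction.card_le_card_orbits_mul_card (G := Γ)
  · have hB : ∀ g ≠ (1 : Γ), (Nat.card (MulAction.fixedBy ((Fin n → K) → (Fin m → K)) g) : ℝ) ≤
        (q : ℝ) ^ (max (((q : ℝ) + 1) / (2 * q)) (1 - 1 / (m : ℝ)) * m * (q : ℝ) ^ n) := by
      intro g hg
      simpa [Nat.card_eq_fintype_card (α := K)] using ExtendedAffine.card_fixedBy_le_rpow hg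
    have hΓ1 : (1 : ℝ) ≤ Nat.card Γ := by exact_mod_cast Nat.card_pos
    calc _ ≤ (q : ℝ) ^ (m * q ^ n) / Nat.card Γ +
          (q : ℝ) ^ (max (((q : ℝ) + 1) / (2 * q)) (1 - 1 / (m : ℝ)) * m * (q : ℝ) ^ n) := by
          exact_mod_cast hX ▸ MulAction.card_orbits_le_of_card_fixedBy_le (by positivity) hB
      _ ≤ _ := by gcongr; exact le_mul_of_one_le_left (by positivity) hΓ1

theorem stmt12 {K : Type*} [Field K] [Fintype K] (n m : ℕ) (hn : 1 ≤ n) (hm : 1 ≤ m)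
    (s : Setoid ((Fin n → K) → (Fin m → K)))
    (hs : ∀ F G : (Fin n → K) → (Fin m → K), s.r F G ↔
      ∃ (P : Matrix (Fin n) (Fin n) K) (a : Fin n → K)
        (Q : Matrix (Fin m) (Fin m) K) (b : Fin m → K),
        IsUnit P ∧ IsUnit Q ∧ ∀ x, G x = Q.mulVec (F (P.mulVec x + a)) + b) :
    (Fintype.card K : ℝ) ^ (m * Fintype.card K ^ n) /
      (((Fintype.card K ^ n * ∏ i ∈ Finset.range n, (Fintype.card K ^ n - Fintype.card K ^ i)) *
        (Fintype.card K ^ m * ∏ i ∈ Finset.range m, (Fintype.card K ^ m - Fintype.card K ^ i)) : ℕ) : ℝ)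
      ≤ (Nat.card (Quotient s) : ℝ) ∧
    (Nat.card (Quotient s) : ℝ) ≤
      (Fintype.card K : ℝ) ^ (m * Fintype.card K ^ n) /
        (((Fintype.card K ^ n * ∏ i ∈ Finset.range n, (Fintype.card K ^ n - Fintype.card K ^ i)) *
          (Fintype.card K ^ m * ∏ i ∈ Finset.range m, (Fintype.card K ^ m - Fintype.card K ^ i)) : ℕ) : ℝ) +
      (((Fintype.card K ^ n * ∏ i ∈ Finset.range n, (Fintype.card K ^ n - Fintype.card K ^ i)) *
        (Fintype.card K ^ m * ∏ i ∈ Finset.range m, (Fintype.card K ^ m - Fintype.card K ^ i)) : ℕ) : ℝ) *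
        (Fintype.card K : ℝ) ^
          ((max (((Fintype.card K : ℝ) + 1) / (2 * (Fintype.card K : ℝ))) (1 - 1 / (m : ℝ)))
            * (m : ℝ) * (Fintype.card K : ℝ) ^ n) :=
  stmt12_general n m s hs
end
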